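/- Let F : ℝ → [0,1] be a continuous cumulative distribution function and let ε > 0. Then there exists a continuous strictly increasing cumulative distribution function G : ℝ → [0,1] such that sup_{u ∈ [0,1]} |F(G^{-1}(u)) − u| ≤ ε, where G^{-1} is the (ordinary) inverse of G. -/

import Mathlib

open Real Filter

/-- For every continuous cdf `F` and `ε > 0` there is a continuous strictly
increasing cdf `G` (with inverse `Ginv`) such that
`sup_{u ∈ [0,1]} |F(G⁻¹(u)) − u| ≤ ε`. -/
theorem exists_strictly_increasing_approx_cdf (F : ℝ → ℝ)
    (hmono : Monotone F) (hcont : Continuous F)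
    (hbot : Filter.Tendsto F Filter.atBot (nhds 0))
    (htop : Filter.Tendsto F Filter.atTop (nhds 1))
    (ε : ℝ) (hε : 0 < ε) :
    ∃ G Ginv : ℝ → ℝ, Continuous G ∧ StrictMono G ∧
      Filter.Tendsto G Filter.atBot (nhds 0) ∧
      Filter.Tendsto G Filter.atTop (nhds 1) ∧
      (∀ x, Ginv (G x) = x) ∧
      (∀ u ∈ Set.Icc (0:ℝ) 1, |F (Ginv u) - u| ≤ ε) := by
  have hπ : (0:ℝ) < π := Real.pi_pos
  -- bounds on F
  have hF0 : ∀ x, 0 ≤ F x := by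
    intro x
    refine le_of_tendsto hbot ?_
    filter_upwards [eventually_le_atBot x] with y hy using hmono hy
  have hF1 : ∀ x, F x ≤ 1 := by
    intro x
    refine ge_of_tendsto htop ?_
    filter_upwards [eventually_ge_atTop x] with y hy using hmono hy
  -- tail points
  obtain ⟨x₀, hx₀⟩ : ∃ x, F x < ε := (hbot.eventually_lt_const hε).exists
  obtain ⟨x₁, hx₁⟩ : ∃ x, 1 - ε < F x :=
    (htop.eventually_const_lt (by linarith : 1 - ε < 1)).exists
  -- logistic-type function
  set L : ℝ → ℝ := fun x => 1 / 2 + Real.arctan x / π with hLdef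
  have hLcont : Continuous L := by
    exact continuous_const.add (Real.continuous_arctan.div_const _)
  have hLmono : StrictMono L := by
    intro a b hab
    have h := Real.arctan_strictMono hab
    have : arctan a / π < arctan b / π := by
      exact div_lt_div_of_pos_right h hπ
    simpa [hLdef] using this
  have hL0 : ∀ x, 0 < L x := by
    intro x
    have h := Real.neg_pi_div_two_lt_arctan x
    have : -(1/2 : ℝ) < arctan x / π := by
      rw [neg_lt, ← neg_div]
      calc -arctan x / π < (π/2) / π := by
            apply div_lt_div_of_pos_right _ hπ; linarith
        _ = 1/2 := by field_simp
    simp only [hLdef]; linarith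
  have hL1 : ∀ x, L x < 1 := by
    intro x
    have h := Real.arctan_lt_pi_div_two x
    have : arctan x / π < 1/2 := by
      calc arctan x / π < (π/2) / π := div_lt_div_of_pos_right h hπ
        _ = 1/2 := by field_simp
    simp only [hLdef]; linarith
  have hLbot : Filter.Tendsto L Filter.atBot (nhds 0) := by
    have := Real.tendsto_arctan_atBot.mono_right nhdsWithin_le_nhds
    have h2 : Filter.Tendsto L Filter.atBot (nhds (1/2 + (-(π/2)) / π)) :=
      tendsto_const_nhds.add (this.div_const _)
    convert h2 using 2
    field_simp; ring
  have hLtop : Filter.Tendsto L Filter.atTop (nhds 1) := by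
    have := Real.tendsto_arctan_atTop.mono_right nhdsWithin_le_nhds
    have h2 : Filter.Tendsto L Filter.atTop (nhds (1/2 + (π/2) / π)) :=
      tendsto_const_nhds.add (this.div_const _)
    convert h2 using 2
    field_simp; ring
  -- the perturbation size
  set δ : ℝ := min ε 1 with hδdef
  have hδpos : 0 < δ := lt_min hε one_pos
  have hδ1 : δ ≤ 1 := min_le_right _ _
  have hδε : δ ≤ ε := min_le_left _ _
  -- the approximating cdf
  set G : ℝ → ℝ := fun x => (1 - δ) * F x + δ * L x with hGdef
  have hGcont : Continuous G := (continuous_const.mul hcont).add (continuous_const.mul hLcont)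
  have hGmono : StrictMono G := by
    intro a b hab
    have h1 : (1 - δ) * F a ≤ (1 - δ) * F b :=
      mul_le_mul_of_nonneg_left (hmono hab.le) (by linarith)
    have h2 : δ * L a < δ * L b := by
      exact mul_lt_mul_of_pos_left (hLmono hab) hδpos
    simp only [hGdef]; linarith
  have hGbot : Filter.Tendsto G Filter.atBot (nhds 0) := by
    have : Filter.Tendsto G Filter.atBot (nhds ((1 - δ) * 0 + δ * 0)) :=
      (hbot.const_mul _).add (hLbot.const_mul _)
    simpa using this
  have hGtop : Filter.Tendsto G Filter.atTop (nhds 1) := by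
    have : Filter.Tendsto G Filter.atTop (nhds ((1 - δ) * 1 + δ * 1)) :=
      (htop.const_mul _).add (hLtop.const_mul _)
    simpa using this
  have hGpos : ∀ x, 0 < G x := by
    intro x
    have h1 : 0 ≤ (1 - δ) * F x := mul_nonneg (by linarith) (hF0 x)
    have h2 : 0 < δ * L x := mul_pos hδpos (hL0 x)
    simp only [hGdef]; linarith
  have hGlt1 : ∀ x, G x < 1 := by
    intro x
    have h1 : (1 - δ) * F x ≤ 1 - δ := by
      calc (1 - δ) * F x ≤ (1 - δ) * 1 :=
        mul_le_mul_of_nonneg_left (hF1 x) (by linarith)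
      _ = 1 - δ := by ring
    have h2 : δ * L x < δ * 1 := mul_lt_mul_of_pos_left (hL1 x) hδpos
    simp only [hGdef]; linarith
  -- the inverse
  classical
  set Ginv : ℝ → ℝ := fun u =>
    if h : ∃ x, G x = u then h.choose else if u ≤ 0 then x₀ else x₁ with hGinvdef
  have hinv : ∀ x, Ginv (G x) = x := by
    intro x
    have h : ∃ y, G y = G x := ⟨x, rfl⟩
    simp only [hGinvdef, dif_pos h]
    exact hGmono.injective h.choose_spec
  refine ⟨G, Ginv, hGcont, hGmono, hGbot, hGtop, hinv, ?_⟩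
  intro u hu
  rcases eq_or_lt_of_le hu.1 with h0 | h0
  · -- u = 0
    subst h0
    have hne : ¬ ∃ x, G x = (0:ℝ) := by
      rintro ⟨x, hx⟩; exact absurd (hx ▸ hGpos x) (by simp)
    simp only [hGinvdef, dif_neg hne, if_pos le_rfl]
    rw [sub_zero, abs_of_nonneg (hF0 x₀)]
    exact hx₀.le
  rcases eq_or_lt_of_le hu.2 with h1 | h1
  · -- u = 1
    subst h1
    have hne : ¬ ∃ x, G x = (1:ℝ) := by
      rintro ⟨x, hx⟩; exact absurd (hx ▸ hGlt1 x) (by simp)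
    simp only [hGinvdef, dif_neg hne, if_neg (by norm_num : ¬ (1:ℝ) ≤ 0)]
    rw [abs_sub_le_iff]
    exact ⟨by linarith [hF1 x₁], by linarith⟩
  · -- 0 < u < 1 : u is in the range of G
    obtain ⟨a, ha⟩ : ∃ a, G a < u := (hGbot.eventually_lt_const h0).exists
    obtain ⟨b, hb⟩ : ∃ b, u < G b := (hGtop.eventually_const_lt h1).exists
    have hab : a ≤ b := by
      by_contra hc
      push_neg at hc
      exact absurd (hGmono hc) (by linarith)
    have hmem : u ∈ Set.Icc (G a) (G b) := ⟨ha.le, hb.le⟩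
    obtain ⟨x, -, hx⟩ := intermediate_value_Icc hab hGcont.continuousOn hmem
    have h : ∃ y, G y = u := ⟨x, hx⟩
    simp only [hGinvdef, dif_pos h]
    set y := h.choose with hy
    have hyx : G y = u := h.choose_spec
    have key : F y - u = δ * (F y - L y) := by
      rw [← hyx]; simp only [hGdef]; ring
    rw [key, abs_mul, abs_of_pos hδpos]
    have hFL : |F y - L y| ≤ 1 := by
      rw [abs_le]
      constructor <;> [linarith [hF0 y, (hL1 y).le]; linarith [hF1 y, (hL0 y).le]]
    calc δ * |F y - L y| ≤ δ * 1 := mul_le_mul_of_nonneg_left hFL hδpos.le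
      _ = δ := mul_one δ
      _ ≤ ε := hδε
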